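/- arXiv:1211.3201 — 8 statements merged into one kernel-verified Lean document; each statement's English description precedes it below -/
import Mathlib

section
/- Let G=(V,E) be a finite simple graph, x: V → ℝ_{>0}, and define α(G;x) = max over vertices u and independent sets S ⊆ N(u) of x(S)/x(u). Given node costs c: V → ℝ_{≥0}, let S = {u ∈ V : c(u) ≤ Σ_{v ∈ N(u)} x(u)·c(v)/x(v)}. Then for every vertex cover S* of G, c(S) ≤ (α(G;x)+1)·c(S*). -/
/-!
Split the selected set `T` along the cover `S*`: `c(T ∩ S*) ≤ c(S*)`, and `T \ S*` is independent.
Each `u ∈ T \ S*` has all its neighbours in `S*`, so its threshold charges `x u * c w / x w` to each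
neighbour `w ∈ S*`. Exchanging the sums, `w` is charged `c w / x w` times the `x`-weight of an
independent subset of `N(w)`, which is at most `α(G;x) * x w`; hence `c(T \ S*) ≤ α(G;x) * c(S*)`.
-/

open Finset

namespace SimpleGraph

variable {V : Type*} [Fintype V] {G : SimpleGraph V} [DecidableRel G.Adj]

lemma sum_neighborFinset_eq_sum_filter_adj {M : Type*} [AddCommMonoid M] {C : Finset V}
    (hC : G.IsVertexCover C) {u : V} (hu : u ∉ C) (f : V → M) :
    ∑ w ∈ G.neighborFinset u, f w = ∑ w ∈ C with G.Adj u w, f w := by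
  refine sum_congr (ext fun w => ?_) fun _ _ => rfl
  simp only [mem_neighborFinset, mem_filter, iff_and_self]
  exact fun huw => (hC huw).resolve_left hu

lemma sum_le_mul_sum_of_disjoint_isVertexCover {x c : V → ℝ} (hx : ∀ v, 0 < x v)
    (hc : ∀ v, 0 ≤ c v) {A : ℝ}
    (hA : ∀ w, ∀ S ⊆ G.neighborFinset w, G.IsIndepSet (S : Set V) → ∑ v ∈ S, x v ≤ A * x w)
    {C I : Finset V} (hC : G.IsVertexCover C) (hIC : Disjoint I C)
    (hcI : ∀ u ∈ I, c u ≤ ∑ w ∈ G.neighborFinset u, x u * c w / x w) :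
    ∑ u ∈ I, c u ≤ A * ∑ w ∈ C, c w := by
  have hI : G.IsIndepSet (I : Set V) :=
    (isIndepSet_compl_iff_isVertexCover.mpr hC).mono fun u hu => Finset.disjoint_left.mp hIC hu
  calc ∑ u ∈ I, c u
      ≤ ∑ u ∈ I, ∑ w ∈ C with G.Adj u w, x u * c w / x w := by
        refine sum_le_sum fun u hu => ?_
        rw [← sum_neighborFinset_eq_sum_filter_adj hC (Finset.disjoint_left.mp hIC hu)]
        exact hcI u hu
    _ = ∑ w ∈ C, c w / x w * ∑ u ∈ I with G.Adj w u, x u := by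
        rw [sum_comm' (t' := C) (s' := fun w => I.filter (G.Adj w)) (by
          simp only [mem_filter, adj_comm]; tauto)]
        refine sum_congr rfl fun w _ => ?_
        rw [mul_sum]
        exact sum_congr rfl fun u _ => by ring
    _ ≤ ∑ w ∈ C, c w / x w * (A * x w) := by
        refine sum_le_sum fun w _ => ?_
        have hN : I.filter (G.Adj w) ⊆ G.neighborFinset w := fun u hu => by
          simpa using (mem_filter.mp hu).2
        gcongr
        · exact div_nonneg (hc w) (hx w).le
        · exact hA w _ hN (hI.mono (coe_subset.mpr (filter_subset _ I)))
    _ = A * ∑ w ∈ C, c w := by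
        rw [mul_sum]
        exact sum_congr rfl fun w _ => by field_simp [(hx w).ne']

end SimpleGraph

theorem stmt1_general {V : Type*} [Fintype V]
    (G : SimpleGraph V) [DecidableRel G.Adj]
    (x c : V → ℝ) (hx : ∀ v, 0 < x v) (hc : ∀ v, 0 ≤ c v)
    (A : ℝ)
    (hA : ∀ u : V, ∀ S : Finset V, S ⊆ G.neighborFinset u →
      (∀ a ∈ S, ∀ b ∈ S, ¬ G.Adj a b) → (∑ v ∈ S, x v) / x u ≤ A)
    (Sstar : Finset V) (hSstar : ∀ u v, G.Adj u v → u ∈ Sstar ∨ v ∈ Sstar) :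
    ∑ u ∈ univ.filter (fun u => c u ≤ ∑ w ∈ G.neighborFinset u, x u * c w / x w), c u
      ≤ (A + 1) * ∑ u ∈ Sstar, c u := by
  classical
  set T := univ.filter (fun u => c u ≤ ∑ w ∈ G.neighborFinset u, x u * c w / x w)
  have hCover : G.IsVertexCover Sstar := fun u v huv => hSstar u v huv
  have hA' : ∀ w, ∀ S ⊆ G.neighborFinset w, G.IsIndepSet (S : Set V) →
      ∑ v ∈ S, x v ≤ A * x w := fun w S hS hind => by
    refine (div_le_iff₀ (hx w)).mp (hA w S hS fun a ha b hb hab => ?_)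
    exact hind ha hb (G.ne_of_adj hab) hab
  have hCovered : ∑ u ∈ T ∩ Sstar, c u ≤ ∑ u ∈ Sstar, c u :=
    sum_le_sum_of_subset_of_nonneg inter_subset_right fun u _ _ => hc u
  have hUncovered : ∑ u ∈ T \ Sstar, c u ≤ A * ∑ u ∈ Sstar, c u :=
    SimpleGraph.sum_le_mul_sum_of_disjoint_isVertexCover hx hc hA' hCover sdiff_disjoint
      fun u hu => (mem_filter.mp (mem_sdiff.mp hu).1).2
  rw [← sum_inter_add_sum_sdiff T Sstar c]
  linarith

/-- Approximation guarantee of the x-scaled (neighbor-threshold) rule: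
if `A` bounds `x(S)/x(u)` over independent subsets `S ⊆ N(u)` (i.e. `A = α(G;x)`),
then the selected set has cost at most `(A+1)` times that of any vertex cover. -/
theorem stmt1 {V : Type*} [Fintype V] [DecidableEq V]
    (G : SimpleGraph V) [DecidableRel G.Adj]
    (x c : V → ℝ) (hx : ∀ v, 0 < x v) (hc : ∀ v, 0 ≤ c v)
    (A : ℝ)
    (hA : ∀ u : V, ∀ S : Finset V, S ⊆ G.neighborFinset u →
      (∀ a ∈ S, ∀ b ∈ S, ¬ G.Adj a b) → (∑ v ∈ S, x v) / x u ≤ A)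
    (Sstar : Finset V) (hSstar : ∀ u v, G.Adj u v → u ∈ Sstar ∨ v ∈ Sstar) :
    ∑ u ∈ univ.filter (fun u => c u ≤ ∑ w ∈ G.neighborFinset u, x u * c w / x w), c u
      ≤ (A + 1) * ∑ u ∈ Sstar, c u :=
  stmt1_general G x c hx hc A hA Sstar hSstar
end

section
/- Let G=(V,E) be a finite simple graph with maximum degree Δ. Given node costs c: V → ℝ_{≥0}, the set S = {u : c(u) ≤ Σ_{v∈N(u)} c(v)} is a vertex cover of cost at most (Δ+1) times the minimum cost of a vertex cover. -/
open Finset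

/-!
Every edge has an endpoint `u` with `c u ≤ c(N(u))`: otherwise each endpoint would cost more
than the other one. For the cost bound, split the selected vertices along any vertex cover `S`.
Those inside `S` cost at most `c(S)`. A selected vertex `u ∉ S` has all its neighbours in `S`, so
it is charged to them; each `w ∈ S` is charged at most `deg w ≤ Δ` times, for a total of at most
`Δ · c(S)`.
-/

namespace SimpleGraph

variable {V R : Type*} [Fintype V] {G : SimpleGraph V} [DecidableRel G.Adj]

section OrderedAddCommMonoid

variable [AddCommMonoid R] [PartialOrder R] [IsOrderedAddMonoid R] {c : V → R}

theorem Adj.le_sum_neighborFinset (hc : ∀ v, 0 ≤ c v) {u v : V} (huv : G.Adj u v) :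
    c v ≤ ∑ w ∈ G.neighborFinset u, c w :=
  single_le_sum (fun w _ => hc w) ((mem_neighborFinset G u v).2 huv)

theorem IsVertexCover.sum_sum_neighborFinset_le [DecidableEq V] (hc : ∀ v, 0 ≤ c v)
    {S A : Finset V} (hS : G.IsVertexCover S) (hA : Disjoint A S) :
    ∑ u ∈ A, ∑ w ∈ G.neighborFinset u, c w ≤ G.maxDegree • ∑ w ∈ S, c w := calc
  ∑ u ∈ A, ∑ w ∈ G.neighborFinset u, c w
      = ∑ w ∈ S, ∑ _u ∈ A ∩ G.neighborFinset w, c w := by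
    refine sum_comm' fun u w => ?_
    simp only [mem_inter, mem_neighborFinset, adj_comm G w u]
    exact ⟨fun ⟨hu, huw⟩ => ⟨⟨hu, huw⟩, (hS huw).resolve_left (Finset.disjoint_left.1 hA hu)⟩,
      fun ⟨h, _⟩ => h⟩
  _ = ∑ w ∈ S, #(A ∩ G.neighborFinset w) • c w := by simp only [sum_const]
  _ ≤ ∑ w ∈ S, G.maxDegree • c w := by
    refine sum_le_sum fun w _ => nsmul_le_nsmul_left (hc w) ?_
    calc #(A ∩ G.neighborFinset w) ≤ #(G.neighborFinset w) := card_le_card inter_subset_right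
      _ = G.degree w := card_neighborFinset_eq_degree G w
      _ ≤ G.maxDegree := G.degree_le_maxDegree w
  _ = G.maxDegree • ∑ w ∈ S, c w := (smul_sum ..).symm

theorem IsVertexCover.sum_le_succ_maxDegree_nsmul (hc : ∀ v, 0 ≤ c v) {S T : Finset V}
    (hS : G.IsVertexCover S) (hT : ∀ u ∈ T, c u ≤ ∑ w ∈ G.neighborFinset u, c w) :
    ∑ u ∈ T, c u ≤ (G.maxDegree + 1) • ∑ w ∈ S, c w := by
  classical
  calc ∑ u ∈ T, c u = ∑ u ∈ T ∩ S, c u + ∑ u ∈ T \ S, c u :=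
        (sum_inter_add_sum_sdiff T S c).symm
    _ ≤ ∑ w ∈ S, c w + ∑ u ∈ T \ S, ∑ w ∈ G.neighborFinset u, c w := add_le_add
        (sum_le_sum_of_subset_of_nonneg inter_subset_right fun w _ _ => hc w)
        (sum_le_sum fun u hu => hT u (mem_sdiff.1 hu).1)
    _ ≤ ∑ w ∈ S, c w + G.maxDegree • ∑ w ∈ S, c w :=
        add_le_add le_rfl (hS.sum_sum_neighborFinset_le hc sdiff_disjoint)
    _ = (G.maxDegree + 1) • ∑ w ∈ S, c w := by rw [succ_nsmul, add_comm]

end OrderedAddCommMonoid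

theorem Adj.le_sum_neighborFinset_or_le_sum_neighborFinset [AddCommMonoid R] [LinearOrder R]
    [IsOrderedAddMonoid R] {c : V → R} (hc : ∀ v, 0 ≤ c v) {u v : V} (huv : G.Adj u v) :
    c u ≤ ∑ w ∈ G.neighborFinset u, c w ∨ c v ≤ ∑ w ∈ G.neighborFinset v, c w := by
  by_contra! h
  exact (huv.le_sum_neighborFinset hc).trans_lt h.1 |>.trans_le
    (huv.symm.le_sum_neighborFinset hc) |>.trans h.2 |>.false

end SimpleGraph

theorem stmt2_general {V : Type*} [Fintype V]
    (G : SimpleGraph V) [DecidableRel G.Adj]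
    (c : V → ℝ) (hc : ∀ v, 0 ≤ c v) :
    (∀ u v, G.Adj u v →
      (c u ≤ ∑ w ∈ G.neighborFinset u, c w) ∨ (c v ≤ ∑ w ∈ G.neighborFinset v, c w)) ∧
    ∀ Sstar : Finset V, (∀ u v, G.Adj u v → u ∈ Sstar ∨ v ∈ Sstar) →
      ∑ u ∈ univ.filter (fun u => c u ≤ ∑ w ∈ G.neighborFinset u, c w), c u
        ≤ ((G.maxDegree : ℝ) + 1) * ∑ u ∈ Sstar, c u := by
  refine ⟨fun u v huv => huv.le_sum_neighborFinset_or_le_sum_neighborFinset hc, fun S hS => ?_⟩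
  have hcover : G.IsVertexCover S := fun u v huv => hS u v huv
  have h := hcover.sum_le_succ_maxDegree_nsmul hc (T := univ.filter _)
    fun u hu => (mem_filter.1 hu).2
  rwa [nsmul_eq_mul, Nat.cast_succ] at h

/-- The rule selecting `{u : c u ≤ ∑_{v ∈ N(u)} c v}` is a vertex cover of cost
at most `(Δ+1)` times the minimum vertex-cover cost. -/
theorem stmt2 {V : Type*} [Fintype V] [DecidableEq V]
    (G : SimpleGraph V) [DecidableRel G.Adj]
    (c : V → ℝ) (hc : ∀ v, 0 ≤ c v) :
    (∀ u v, G.Adj u v →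
      (c u ≤ ∑ w ∈ G.neighborFinset u, c w) ∨ (c v ≤ ∑ w ∈ G.neighborFinset v, c w)) ∧
    ∀ Sstar : Finset V, (∀ u v, G.Adj u v → u ∈ Sstar ∨ v ∈ Sstar) →
      ∑ u ∈ univ.filter (fun u => c u ≤ ∑ w ∈ G.neighborFinset u, c w), c u
        ≤ ((G.maxDegree : ℝ) + 1) * ∑ u ∈ Sstar, c u :=
  stmt2_general G c hc
end

section
/- For every graph G=(V,E), vertex u ∈ V, and independent set S ⊆ N(u) maximizing x(S)/x(u) over all such pairs, the cost vector c with c(u) = x(u), c(v) = x(v) for v ∈ S, and c(w) = 0 otherwise makes the x-scaled rule output a set containing {u} ∪ S of cost x(u) + x(S), while V \ S is a vertex cover of cost x(u). Hence the approximation ratio of the x-scaled rule on G is at least 1 + α(G;x). -/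
open Finset

/-!
Under `c`, every vertex of `{u} ∪ S` has cost equal to its weight and, since `S ⊆ N(u)` is
nonempty, a neighbour in `{u} ∪ S`; along such an edge the scaled threshold `x(w) c(v) / x(v)`
equals `x(w) = c(w)`, so the rule selects all of `{u} ∪ S`. Independence of `S` makes its
complement a vertex cover, and the only vertex outside `S` of nonzero cost is `u`.
-/

section TightCost

variable {V : Type*} [DecidableEq V]

def tightCost (x : V → ℝ) (u : V) (S : Finset V) : V → ℝ :=
  fun w => if w = u then x u else if w ∈ S then x w else 0

variable (x : V → ℝ) (u : V) (S : Finset V)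

lemma tightCost_of_mem_insert {w : V} (hw : w ∈ insert u S) : tightCost x u S w = x w := by
  rcases mem_insert.mp hw with rfl | hwS
  · simp [tightCost]
  · unfold tightCost
    split_ifs with hwu
    · rw [hwu]
    · rfl

lemma tightCost_of_notMem_insert {w : V} (hw : w ∉ insert u S) : tightCost x u S w = 0 := by
  rw [mem_insert, not_or] at hw
  simp [tightCost, hw.1, hw.2]

lemma sum_tightCost_insert (hu : u ∉ S) :
    ∑ w ∈ insert u S, tightCost x u S w = x u + ∑ v ∈ S, x v := by
  rw [sum_insert hu, tightCost_of_mem_insert x u S (mem_insert_self u S)]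
  congr 1
  exact sum_congr rfl fun v hv => tightCost_of_mem_insert x u S (mem_insert_of_mem hv)

lemma sum_tightCost_compl [Fintype V] (hu : u ∉ S) : ∑ w ∈ Sᶜ, tightCost x u S w = x u := by
  rw [sum_eq_single_of_mem u (mem_compl.mpr hu)]
  · exact tightCost_of_mem_insert x u S (mem_insert_self u S)
  · intro w hw hwu
    refine tightCost_of_notMem_insert x u S ?_
    rw [mem_insert, not_or]
    exact ⟨hwu, mem_compl.mp hw⟩

end TightCost

lemma le_mul_div_of_eq_weights {V : Type*} {x c : V → ℝ} {v w : V} (hv : x v ≠ 0)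
    (hcv : c v = x v) (hcw : c w = x w) : c w ≤ x w * c v / x v := by
  rw [hcv, mul_div_assoc, div_self hv, mul_one, hcw]

lemma SimpleGraph.exists_adj_mem_insert_of_subset_neighborFinset {V : Type*} [Fintype V]
    [DecidableEq V] (G : SimpleGraph V) [DecidableRel G.Adj] {u : V} {S : Finset V}
    (hS : S ⊆ G.neighborFinset u) (hSne : S.Nonempty) {w : V} (hw : w ∈ insert u S) :
    ∃ v ∈ insert u S, G.Adj w v := by
  rcases mem_insert.mp hw with rfl | hwS
  · obtain ⟨v, hv⟩ := hSne
    exact ⟨v, mem_insert_of_mem hv, (G.mem_neighborFinset w v).mp (hS hv)⟩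
  · exact ⟨u, mem_insert_self u S, ((G.mem_neighborFinset u w).mp (hS hwS)).symm⟩

lemma compl_covers_edges_of_independent {V : Type*} [Fintype V] [DecidableEq V]
    {G : SimpleGraph V} {S : Finset V} (hindep : ∀ a ∈ S, ∀ b ∈ S, ¬ G.Adj a b)
    {a b : V} (hab : G.Adj a b) : a ∈ Sᶜ ∨ b ∈ Sᶜ := by
  simp only [mem_compl, ← not_and_or]
  exact fun ⟨ha, hb⟩ => hindep a ha b hb hab

theorem stmt3_general {V : Type*} [Fintype V] [DecidableEq V]
    (G : SimpleGraph V) [DecidableRel G.Adj]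
    (x : V → ℝ) (hx : ∀ v, 0 < x v)
    (u : V) (S : Finset V) (hS : S ⊆ G.neighborFinset u) (hSne : S.Nonempty)
    (hindep : ∀ a ∈ S, ∀ b ∈ S, ¬ G.Adj a b)
    (c : V → ℝ)
    (hc : ∀ w, c w = if w = u then x u else if w ∈ S then x w else 0) :
    (∀ w ∈ insert u S, ∃ v ∈ G.neighborFinset w, c w ≤ x w * c v / x v) ∧
    (∑ w ∈ insert u S, c w = x u + ∑ v ∈ S, x v) ∧
    (∀ a b, G.Adj a b → a ∈ Sᶜ ∨ b ∈ Sᶜ) ∧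
    (∑ w ∈ Sᶜ, c w = x u) := by
  obtain rfl : c = tightCost x u S := funext hc
  have hu : u ∉ S := fun h => G.notMem_neighborFinset_self u (hS h)
  refine ⟨fun w hw => ?_, sum_tightCost_insert x u S hu,
    fun a b => compl_covers_edges_of_independent hindep, sum_tightCost_compl x u S hu⟩
  obtain ⟨v, hv, hwv⟩ := G.exists_adj_mem_insert_of_subset_neighborFinset hS hSne hw
  exact ⟨v, (G.mem_neighborFinset w v).mpr hwv, le_mul_div_of_eq_weights (hx v).ne'
    (tightCost_of_mem_insert x u S hv) (tightCost_of_mem_insert x u S hw)⟩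

/-- Tightness of the approximation ratio of the x-scaled rule: for `u` and an independent
`S ⊆ N(u)` maximizing `x(S)/x(u)`, the cost vector `c(u)=x(u)`, `c(v)=x(v)` on `S`, `0`
elsewhere makes the edge-threshold x-scaled rule select all of `{u} ∪ S`, of cost
`x(u)+x(S)`, while `V∖S` is a vertex cover of cost `x(u)`. -/
theorem stmt3 {V : Type*} [Fintype V] [DecidableEq V]
    (G : SimpleGraph V) [DecidableRel G.Adj]
    (x : V → ℝ) (hx : ∀ v, 0 < x v)
    (u : V) (S : Finset V) (hS : S ⊆ G.neighborFinset u) (hSne : S.Nonempty)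
    (hindep : ∀ a ∈ S, ∀ b ∈ S, ¬ G.Adj a b)
    (hmax : ∀ u' : V, ∀ S' : Finset V, S' ⊆ G.neighborFinset u' →
      (∀ a ∈ S', ∀ b ∈ S', ¬ G.Adj a b) →
      (∑ v ∈ S', x v) / x u' ≤ (∑ v ∈ S, x v) / x u)
    (c : V → ℝ)
    (hc : ∀ w, c w = if w = u then x u else if w ∈ S then x w else 0) :
    (∀ w ∈ insert u S, ∃ v ∈ G.neighborFinset w, c w ≤ x w * c v / x v) ∧
    (∑ w ∈ insert u S, c w = x u + ∑ v ∈ S, x v) ∧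
    (∀ a b, G.Adj a b → a ∈ Sᶜ ∨ b ∈ Sᶜ) ∧
    (∑ w ∈ Sᶜ, c w = x u) :=
  stmt3_general G x hx u S hS hSne hindep c hc
end

section
/- For every n ≥ 2, let G^n be the bipartite graph with vertices u_1,…,u_n,v_1,…,v_n and edges (u_i, v_j) for all i ≠ j, where agent i owns {u_i, v_i}. Then any family of induced subgraphs of G^n, each containing at most one node from each pair {u_i, v_i}, whose edge sets together cover all edges of G^n, must have size at least 1 + log_2 n. -/
/-!
For an agent `i`, let `F i` be the set of subgraphs containing `u_i`. If `F i ⊆ F j` with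
`i ≠ j`, the subgraph covering the edge `(u_i, v_j)` would contain both `u_j` and `v_j`; so the
`F i` are `n` distinct sets forming an antichain in the power set of the `k` subgraphs.
Erasing a fixed element is injective on an antichain, hence `n ≤ 2 ^ (k - 1)`.
-/

open Finset

theorem Finset.card_le_two_pow_pred_of_isAntichain {α : Type*} [Fintype α] [DecidableEq α]
    (a : α) {𝒜 : Finset (Finset α)} (h𝒜 : IsAntichain (· ⊆ ·) (𝒜 : Set (Finset α))) :
    #𝒜 ≤ 2 ^ (Fintype.card α - 1) := by
  have hinj : Set.InjOn (fun s : Finset α => s.erase a) 𝒜 := by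
    intro s hs t ht (hst : s.erase a = t.erase a)
    -- `s` and `t` agree off `a`, so one of them contains the other.
    by_cases ha : a ∈ t
    · refine h𝒜.eq hs ht fun x hx => ?_
      by_cases hxa : x = a
      · exact hxa ▸ ha
      · exact mem_of_mem_erase (hst ▸ mem_erase_of_ne_of_mem hxa hx : x ∈ t.erase a)
    · refine (h𝒜.eq ht hs fun x hx => ?_).symm
      have : x ∈ t.erase a := mem_erase_of_ne_of_mem (ne_of_mem_of_not_mem hx ha) hx
      exact mem_of_mem_erase (hst ▸ this : x ∈ s.erase a)
  calc #𝒜 = #(𝒜.image fun s => s.erase a) := (card_image_of_injOn hinj).symm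
    _ ≤ #(univ.erase a).powerset :=
        card_le_card fun s hs => by
          obtain ⟨t, -, rfl⟩ := mem_image.1 hs
          exact mem_powerset.2 (erase_subset_erase a (subset_univ t))
    _ = 2 ^ (Fintype.card α - 1) := by
        rw [card_powerset, card_erase_of_mem (mem_univ a), card_univ]

theorem Fintype.card_le_two_pow_pred_of_not_subset {α β : Type*} [Fintype α] [Fintype β]
    [Nonempty α] (f : β → Finset α) (hf : ∀ i j, i ≠ j → ¬ f i ⊆ f j) :
    Fintype.card β ≤ 2 ^ (Fintype.card α - 1) := by
  classical
  have hinj : Function.Injective f := fun i j hij => by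
    by_contra hne
    exact hf i j hne hij.subset
  have hanti : IsAntichain (· ⊆ ·) ((univ.image f : Finset _) : Set (Finset α)) := by
    rintro _ hs _ ht hne
    obtain ⟨i, -, rfl⟩ := mem_image.1 hs
    obtain ⟨j, -, rfl⟩ := mem_image.1 ht
    exact hf i j (ne_of_apply_ne f hne)
  calc Fintype.card β = #(univ.image f) := by rw [card_image_of_injective _ hinj, card_univ]
    _ ≤ _ := card_le_two_pow_pred_of_isAntichain (Classical.arbitrary α) hanti

theorem card_le_two_pow_pred_of_isCover {ι β : Type*} [Fintype ι] [Fintype β] [Nonempty ι]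
    (W : ι → Set (β ⊕ β)) (hsingle : ∀ q i, ¬ (Sum.inl i ∈ W q ∧ Sum.inr i ∈ W q))
    (hcover : ∀ i j, i ≠ j → ∃ q, Sum.inl i ∈ W q ∧ Sum.inr j ∈ W q) :
    Fintype.card β ≤ 2 ^ (Fintype.card ι - 1) := by
  classical
  refine Fintype.card_le_two_pow_pred_of_not_subset (fun i => {q | Sum.inl i ∈ W q}) ?_
  intro i j hij hsub
  obtain ⟨q, hqi, hqj⟩ := hcover i j hij
  exact hsingle q j ⟨by simpa using hsub (by simpa using hqi), hqj⟩

theorem Real.one_add_logb_two_le_of_le_two_pow {n k : ℕ} (hn : 0 < n) (hk : 1 ≤ k)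
    (h : n ≤ 2 ^ (k - 1)) : 1 + Real.logb 2 n ≤ k := by
  have hlog : Real.logb 2 n ≤ (k - 1 : ℕ) := by
    rw [Real.logb_le_iff_le_rpow one_lt_two (by exact_mod_cast hn), Real.rpow_natCast]
    exact_mod_cast h
  rw [Nat.cast_sub hk, Nat.cast_one] at hlog
  linarith

/-- Any family of single-dimensional subgraphs (at most one node from each pair
`{u_i, v_i}`) of the graph `G^n` (bipartite, with edges `(u_i, v_j)` for `i ≠ j`) whose
edge sets cover all edges of `G^n` has size at least `1 + log₂ n`. -/
theorem stmt7 (n k : ℕ) (hn : 2 ≤ n)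
    (W : Fin k → Set (Fin n ⊕ Fin n))
    (hsingle : ∀ q i, ¬ (Sum.inl i ∈ W q ∧ Sum.inr i ∈ W q))
    (hcover : ∀ i j : Fin n, i ≠ j → ∃ q, Sum.inl i ∈ W q ∧ Sum.inr j ∈ W q) :
    1 + Real.logb 2 n ≤ (k : ℝ) := by
  obtain ⟨q, -⟩ := hcover ⟨0, by omega⟩ ⟨1, by omega⟩ (by simp)
  have : Nonempty (Fin k) := ⟨q⟩
  have hle := card_le_two_pow_pred_of_isCover W hsingle hcover
  rw [Fintype.card_fin, Fintype.card_fin] at hle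
  exact Real.one_add_logb_two_le_of_le_two_pow (by omega) q.pos hle
end

section
/- Let B = (X ∪ Y, F) be a bipartite graph in which every vertex of X has degree at most d. Given node costs c ≥ 0, consider the rule that for each u ∈ Y selects u if c(u) ≤ Σ_{v ∈ N(u)} c(v), and selects all of N(u) otherwise. The resulting set S is a vertex cover of B of cost at most 2d · OPT(B,c), where OPT(B,c) is the minimum vertex-cover cost of B. -/
/-!
Selecting `u` or `N(u)`, whichever is cheaper, pays exactly the cost of a cheapest cover of the
star at `u`, so the selected set costs at most the sum of these star costs. Against any vertex
cover `T`, the star at `u` costs at most `c u` if `u ∈ T`, and at most `c (N(u) ∩ T)` otherwise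
since then `N(u) ⊆ T`. Summing over `Y`, each `z ∈ T` is charged once for itself and at most
`deg z ≤ d` times as a neighbour, giving `(1 + d) c(T) ≤ 2d c(T)`.
-/

open Finset

namespace Finset

variable {ι : Type*} [DecidableEq ι] {f : ι → ℝ}

theorem sum_union_le_of_nonneg (hf : ∀ i, 0 ≤ f i) (s t : Finset ι) :
    ∑ i ∈ s ∪ t, f i ≤ ∑ i ∈ s, f i + ∑ i ∈ t, f i := by
  rw [← sum_union_inter]
  exact le_add_of_nonneg_right (sum_nonneg fun i _ => hf i)

theorem sum_biUnion_le_of_nonneg {κ : Type*} (hf : ∀ i, 0 ≤ f i) (t : Finset κ)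
    (s : κ → Finset ι) : ∑ i ∈ t.biUnion s, f i ≤ ∑ j ∈ t, ∑ i ∈ s j, f i := by
  rw [← sup_eq_biUnion]
  exact apply_sup_le_sum (f := fun s => ∑ i ∈ s, f i) sum_empty
    (sum_union_le_of_nonneg hf _ _) t

end Finset

namespace SimpleGraph

variable {V : Type*} [Fintype V] [DecidableEq V] (G : SimpleGraph V) [DecidableRel G.Adj]
  (c : V → ℝ)

noncomputable def starRule (Y : Finset V) : Finset V :=
  Y.filter (fun w => c w ≤ ∑ z ∈ G.neighborFinset w, c z) ∪
    (Y.filter (fun w => ¬ c w ≤ ∑ z ∈ G.neighborFinset w, c z)).biUnion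
      fun w => G.neighborFinset w

/-- The cost of a cheapest vertex cover of the star centred at `u`. -/
def starCost (u : V) : ℝ :=
  min (c u) (∑ z ∈ G.neighborFinset u, c z)

variable {G c}

theorem isVertexCover_starRule {Y : Finset V} (hY : G.IsVertexCover Y) :
    G.IsVertexCover (G.starRule c Y : Set V) := by
  have key : ∀ {u v}, G.Adj u v → u ∈ Y → u ∈ G.starRule c Y ∨ v ∈ G.starRule c Y := by
    intro u v huv hu
    by_cases hcheap : c u ≤ ∑ z ∈ G.neighborFinset u, c z
    · exact .inl (mem_union_left _ (mem_filter.mpr ⟨hu, hcheap⟩))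
    · exact .inr (mem_union_right _ (mem_biUnion.mpr
        ⟨u, mem_filter.mpr ⟨hu, hcheap⟩, (mem_neighborFinset _ _ _).mpr huv⟩))
  intro u v huv
  rcases hY huv with hu | hv
  · exact key huv hu
  · exact (key huv.symm hv).symm

theorem sum_starRule_le (hc : ∀ v, 0 ≤ c v) (Y : Finset V) :
    ∑ v ∈ G.starRule c Y, c v ≤ ∑ u ∈ Y, G.starCost c u := by
  rw [← sum_filter_add_sum_filter_not Y (fun w => c w ≤ ∑ z ∈ G.neighborFinset w, c z)]
  refine (sum_union_le_of_nonneg hc _ _).trans (add_le_add (le_of_eq ?_) ?_)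
  · exact sum_congr rfl fun u hu => (min_eq_left (mem_filter.mp hu).2).symm
  · refine (sum_biUnion_le_of_nonneg hc _ _).trans (le_of_eq ?_)
    exact sum_congr rfl fun u hu => (min_eq_right (not_le.mp (mem_filter.mp hu).2).le).symm

theorem starCost_le_of_isVertexCover (hc : ∀ v, 0 ≤ c v) {T : Finset V}
    (hT : G.IsVertexCover T) (u : V) :
    G.starCost c u ≤ (if u ∈ T then c u else 0) + ∑ z ∈ G.neighborFinset u ∩ T, c z := by
  have hTsum : 0 ≤ ∑ z ∈ G.neighborFinset u ∩ T, c z := sum_nonneg fun z _ => hc z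
  split_ifs with hu
  · exact (min_le_left _ _).trans (le_add_of_nonneg_right hTsum)
  · have hN : G.neighborFinset u ∩ T = G.neighborFinset u :=
      inter_eq_left.mpr fun z hz =>
        (hT ((mem_neighborFinset _ _ _).mp hz)).resolve_left hu
    rw [zero_add, hN]
    exact min_le_right _ _

theorem sum_sum_neighborFinset_inter_le (hc : ∀ v, 0 ≤ c v) {Y : Finset V} {d : ℕ}
    (hdeg : ∀ u ∈ Y, ∀ z, G.Adj u z → G.degree z ≤ d) (T : Finset V) :
    ∑ u ∈ Y, ∑ z ∈ G.neighborFinset u ∩ T, c z ≤ d * ∑ z ∈ T, c z := by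
  have hswap : ∑ u ∈ Y, ∑ z ∈ G.neighborFinset u ∩ T, c z =
      ∑ z ∈ T, ∑ _u ∈ Y ∩ G.neighborFinset z, c z :=
    sum_comm' fun u z => by simp only [mem_inter, mem_neighborFinset, adj_comm]; tauto
  have hcard : ∀ z, #(Y ∩ G.neighborFinset z) ≤ d := by
    intro z
    rcases (Y ∩ G.neighborFinset z).eq_empty_or_nonempty with hempty | ⟨u, hu⟩
    · simp [hempty]
    · rw [mem_inter, mem_neighborFinset] at hu
      calc #(Y ∩ G.neighborFinset z) ≤ #(G.neighborFinset z) := card_le_card inter_subset_right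
        _ = G.degree z := card_neighborFinset_eq_degree G z
        _ ≤ d := hdeg u hu.1 z hu.2.symm
  rw [hswap, mul_sum]
  refine sum_le_sum fun z _ => ?_
  rw [sum_const, nsmul_eq_mul]
  exact mul_le_mul_of_nonneg_right (by exact_mod_cast hcard z) (hc z)

theorem sum_starCost_le_of_isVertexCover (hc : ∀ v, 0 ≤ c v) {Y : Finset V} {d : ℕ}
    (hdeg : ∀ u ∈ Y, ∀ z, G.Adj u z → G.degree z ≤ d) {T : Finset V}
    (hT : G.IsVertexCover T) :
    ∑ u ∈ Y, G.starCost c u ≤ 2 * d * ∑ z ∈ T, c z := by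
  rcases Nat.eq_zero_or_pos d with rfl | hd
  · -- `1 + d ≤ 2 * d` fails for `d = 0`, but then no vertex of `Y` has a neighbour
    calc ∑ u ∈ Y, G.starCost c u ≤ ∑ u ∈ Y, ∑ z ∈ G.neighborFinset u ∩ univ, c z :=
          sum_le_sum fun u _ => by rw [inter_univ]; exact min_le_right _ _
      _ ≤ 0 := by simpa using sum_sum_neighborFinset_inter_le hc hdeg univ
      _ = 2 * (0 : ℕ) * ∑ z ∈ T, c z := by simp
  have hTsum : 0 ≤ ∑ z ∈ T, c z := sum_nonneg fun z _ => hc z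
  have hd : (1 : ℝ) ≤ d := by exact_mod_cast hd
  calc ∑ u ∈ Y, G.starCost c u
      ≤ ∑ u ∈ Y, ((if u ∈ T then c u else 0) + ∑ z ∈ G.neighborFinset u ∩ T, c z) :=
        sum_le_sum fun u _ => starCost_le_of_isVertexCover hc hT u
    _ = ∑ u ∈ Y ∩ T, c u + ∑ u ∈ Y, ∑ z ∈ G.neighborFinset u ∩ T, c z := by
        rw [sum_add_distrib, sum_ite_mem]
    _ ≤ ∑ z ∈ T, c z + d * ∑ z ∈ T, c z :=
        add_le_add (sum_le_sum_of_subset_of_nonneg inter_subset_right fun z _ _ => hc z)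
          (sum_sum_neighborFinset_inter_le hc hdeg T)
    _ ≤ 2 * d * ∑ z ∈ T, c z := by nlinarith

end SimpleGraph

/-- Star rule on a bipartite graph `B = (X ∪ Y, F)` where every vertex of `X` has degree
at most `d`: for each `u ∈ Y` select `u` if `c u ≤ ∑_{v ∈ N(u)} c v` and select `N(u)`
otherwise. The result is a vertex cover of cost at most `2d` times the optimum. -/
theorem stmt10 {V : Type*} [Fintype V] [DecidableEq V]
    (B : SimpleGraph V) [DecidableRel B.Adj]
    (X Y : Finset V) (hdisj : Disjoint X Y)
    (hbip : ∀ u v, B.Adj u v → (u ∈ X ∧ v ∈ Y) ∨ (u ∈ Y ∧ v ∈ X))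
    (d : ℕ) (hdeg : ∀ v ∈ X, B.degree v ≤ d)
    (c : V → ℝ) (hc : ∀ v, 0 ≤ c v) :
    (∀ u v, B.Adj u v →
      u ∈ (Y.filter (fun w => c w ≤ ∑ z ∈ B.neighborFinset w, c z)) ∪
          (Y.filter (fun w => ¬ c w ≤ ∑ z ∈ B.neighborFinset w, c z)).biUnion
            (fun w => B.neighborFinset w) ∨
      v ∈ (Y.filter (fun w => c w ≤ ∑ z ∈ B.neighborFinset w, c z)) ∪
          (Y.filter (fun w => ¬ c w ≤ ∑ z ∈ B.neighborFinset w, c z)).biUnion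
            (fun w => B.neighborFinset w)) ∧
    ∀ T : Finset V, (∀ u v, B.Adj u v → u ∈ T ∨ v ∈ T) →
      ∑ v ∈ (Y.filter (fun w => c w ≤ ∑ z ∈ B.neighborFinset w, c z)) ∪
          (Y.filter (fun w => ¬ c w ≤ ∑ z ∈ B.neighborFinset w, c z)).biUnion
            (fun w => B.neighborFinset w), c v
        ≤ 2 * d * ∑ v ∈ T, c v := by
  have hY : B.IsVertexCover Y := fun u v huv => by
    rcases hbip u v huv with ⟨-, hv⟩ | ⟨hu, -⟩
    exacts [.inr hv, .inl hu]
  have hdegY : ∀ u ∈ Y, ∀ z, B.Adj u z → B.degree z ≤ d := fun u hu z huz =>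
    hdeg z <| ((hbip u z huz).resolve_left fun h => disjoint_left.mp hdisj h.1 hu).2
  refine ⟨fun u v huv => SimpleGraph.isVertexCover_starRule (c := c) hY huv, fun T hT => ?_⟩
  exact (SimpleGraph.sum_starRule_le hc Y).trans
    (SimpleGraph.sum_starCost_le_of_isVertexCover hc hdegY fun u v huv => hT u v huv)
end

section
/- Let B = (X ∪ Y, F) be a bipartite graph and for each u ∈ Y let S*_u be a minimum-cost vertex cover of the star centered at u with leaves N(u). If every vertex of X has degree at most d in B, then Σ_{u∈Y} c(S*_u) ≤ d · OPT(B, c), where OPT(B,c) is the minimum cost of a vertex cover of B under nonnegative node costs c. -/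
open Finset

/-
Fix a vertex cover `T`. A vertex `u ∈ Y ∩ T` pays at most `c u`, which is at most `d · c u`
as soon as `u` has a neighbour (that neighbour lies in `X`, so `d ≥ 1`). A vertex `u ∈ Y \ T`
has all its neighbours in `T \ Y` and pays at most their total cost; summed over `u`, each
`v ∈ T \ Y` is counted at most `deg v ≤ d` times.
-/

namespace SimpleGraph

variable {V : Type*} [Fintype V] (G : SimpleGraph V) [DecidableRel G.Adj]

theorem min_sum_neighborFinset_le_mul {c : V → ℝ} {u : V} (hcu : 0 ≤ c u) {d : ℕ}
    (hd : ∀ v, G.Adj u v → G.degree v ≤ d) :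
    min (c u) (∑ v ∈ G.neighborFinset u, c v) ≤ d * c u := by
  rcases (G.neighborFinset u).eq_empty_or_nonempty with hN | ⟨v, hv⟩
  · rw [hN, sum_empty, min_eq_right hcu]
    positivity
  · have hadj : G.Adj u v := (G.mem_neighborFinset u v).mp hv
    have hd1 : (1 : ℝ) ≤ d := by
      have : 0 < G.degree v := G.degree_pos_iff_exists_adj v |>.mpr ⟨u, hadj.symm⟩
      exact_mod_cast this.trans_le (hd v hadj)
    calc min (c u) (∑ v ∈ G.neighborFinset u, c v) ≤ c u := min_le_left _ _
      _ ≤ d * c u := le_mul_of_one_le_left hcu hd1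

theorem sum_sum_neighborFinset_le_mul [DecidableEq V] {f : V → ℝ} {s t : Finset V} {d : ℕ}
    (hst : ∀ u ∈ s, G.neighborFinset u ⊆ t) (hdeg : ∀ v ∈ t, G.degree v ≤ d)
    (hf : ∀ v ∈ t, 0 ≤ f v) :
    ∑ u ∈ s, ∑ v ∈ G.neighborFinset u, f v ≤ d * ∑ v ∈ t, f v := by
  have hswap : ∑ u ∈ s, ∑ v ∈ G.neighborFinset u, f v
      = ∑ v ∈ t, ∑ _u ∈ s ∩ G.neighborFinset v, f v := by
    refine sum_comm' fun u v => ?_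
    simp only [mem_inter, mem_neighborFinset, G.adj_comm v u]
    exact ⟨fun ⟨hu, huv⟩ => ⟨⟨hu, huv⟩, hst u hu ((G.mem_neighborFinset u v).mpr huv)⟩,
      fun ⟨⟨hu, huv⟩, _⟩ => ⟨hu, huv⟩⟩
  rw [hswap, mul_sum]
  refine sum_le_sum fun v hv => ?_
  rw [sum_const, nsmul_eq_mul]
  have hcard : #(s ∩ G.neighborFinset v) ≤ d :=
    (card_le_card inter_subset_right).trans (G.card_neighborFinset_eq_degree v ▸ hdeg v hv)
  exact mul_le_mul_of_nonneg_right (by exact_mod_cast hcard) (hf v hv)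

end SimpleGraph

/-- In a bipartite graph `B = (X ∪ Y, F)` in which every vertex of `X` has degree at most
`d`, the sum over `u ∈ Y` of the minimum cost of a vertex cover of the star centered at
`u` is at most `d` times the minimum vertex-cover cost of `B`. -/
theorem stmt11 {V : Type*} [Fintype V] [DecidableEq V]
    (B : SimpleGraph V) [DecidableRel B.Adj]
    (X Y : Finset V) (hdisj : Disjoint X Y)
    (hbip : ∀ u v, B.Adj u v → (u ∈ X ∧ v ∈ Y) ∨ (u ∈ Y ∧ v ∈ X))
    (d : ℕ) (hdeg : ∀ v ∈ X, B.degree v ≤ d)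
    (c : V → ℝ) (hc : ∀ v, 0 ≤ c v) :
    ∀ T : Finset V, (∀ u v, B.Adj u v → u ∈ T ∨ v ∈ T) →
      ∑ u ∈ Y, min (c u) (∑ v ∈ B.neighborFinset u, c v) ≤ d * ∑ v ∈ T, c v := by
  intro T hT
  have hYadj : ∀ u ∈ Y, ∀ v, B.Adj u v → v ∉ Y := fun u hu v huv => by
    rcases hbip u v huv with ⟨huX, _⟩ | ⟨_, hvX⟩
    · exact absurd hu (disjoint_left.mp hdisj huX)
    · exact disjoint_left.mp hdisj hvX
  have hdeg' : ∀ v ∉ Y, B.degree v ≤ d := fun v hv => by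
    by_cases hvX : v ∈ X
    · exact hdeg v hvX
    · have : B.degree v = 0 := B.degree_eq_zero_iff_notMem_support v |>.mpr fun ⟨w, hvw⟩ => by
        rcases hbip v w hvw with ⟨h, _⟩ | ⟨h, _⟩ <;> contradiction
      omega
  have hin : ∑ u ∈ Y ∩ T, min (c u) (∑ v ∈ B.neighborFinset u, c v) ≤ ∑ u ∈ T ∩ Y, d * c u := by
    rw [inter_comm]
    exact sum_le_sum fun u hu => B.min_sum_neighborFinset_le_mul (hc u)
      fun v huv => hdeg' v (hYadj u (mem_inter.mp hu).2 v huv)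
  have hout : ∑ u ∈ Y \ T, min (c u) (∑ v ∈ B.neighborFinset u, c v) ≤ d * ∑ v ∈ T \ Y, c v :=
    (sum_le_sum fun u _ => min_le_right _ _).trans <|
      B.sum_sum_neighborFinset_le_mul (fun u hu v hv => by
          obtain ⟨huY, huT⟩ := mem_sdiff.mp hu
          have huv := (B.mem_neighborFinset u v).mp hv
          exact mem_sdiff.mpr ⟨(hT u v huv).resolve_left huT, hYadj u huY v huv⟩)
        (fun v hv => hdeg' v (mem_sdiff.mp hv).2) fun v _ => hc v
  rw [← sum_inter_add_sum_sdiff Y T, ← sum_inter_add_sum_sdiff T Y, mul_add, mul_sum]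
  exact add_le_add hin hout
end

section
/- If (y*, x*) is an optimal solution to the facility location LP and algorithm A is an LMP ρ-approximation (returning for any instance a solution (F, σ) with ρ·Σ_{ℓ∈F} f_ℓ + Σ_j c_{σ(j)j} ≤ ρ·OPT_LP), then the LP max{Σ_q λ_q : Σ_q λ_q y^(q)_ℓ = y*_ℓ ∀ℓ, Σ_q λ_q (Σ_{j,ℓ} c_{ℓj} x^(q)_{ℓj}) ≤ ρ Σ_{j,ℓ} c_{ℓj} x*_{ℓj}, Σ_q λ_q ≤ 1, λ ≥ 0} over all integral LP-feasible solutions (y^(q), x^(q)) has optimal value exactly 1. -/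
/-! If `(y*, ρ·conn(x*))` is not dominated by a convex combination of the points
`(y^(q), conn(x^(q)))` of integral solutions `q`, Hahn–Banach separates it from them by a pair
`(α, β)` with `β ≥ 0`: every integral `q` has `α·y^(q) + β·conn(x^(q)) > α·y* + βρ·conn(x*)`.
Running the LMP algorithm with facility costs `α⁺/ρ` and connection costs `β·c`, and then also
opening every facility with `α_ℓ < 0` (profitable because `y* ≤ 1`), gives an integral solution
violating this. -/

open Finset

/-- Feasibility for the facility-location LP relaxation (FL-P): every client is
fractionally covered, and `0 ≤ x ≤ y ≤ 1`. -/
def FLFeas {F D : Type*} [Fintype F] (y : F → ℝ) (x : F → D → ℝ) : Prop :=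
  (∀ j : D, 1 ≤ ∑ ℓ, x ℓ j) ∧ ∀ (ℓ : F) (j : D), (0 ≤ x ℓ j ∧ x ℓ j ≤ y ℓ) ∧ y ℓ ≤ 1

/-- 0/1 vector associated to a Boolean facility-opening vector. -/
def boolY {F : Type*} (q : F → Bool) : F → ℝ := fun ℓ => if q ℓ then 1 else 0

/-- 0/1 matrix associated to a Boolean assignment. -/
def boolX {F D : Type*} (q : F → D → Bool) : F → D → ℝ := fun ℓ j => if q ℓ j then 1 else 0

section Separation

variable {ι E : Type*} [Fintype ι] [NormedAddCommGroup E] [NormedSpace ℝ E]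

theorem exists_mem_stdSimplex_sum_smul_eq_of_forall_dual (s : Set ι) (v : ι → E) (c : ι → ℝ)
    (y : E) (t : ℝ)
    (h : ∀ (φ : StrongDual ℝ E) (β : ℝ), 0 ≤ β → ∃ i ∈ s, φ (v i) + β * c i ≤ φ y + β * t) :
    ∃ w ∈ stdSimplex ℝ ι, (∀ i ∉ s, w i = 0) ∧ ∑ i, w i • v i = y ∧ ∑ i, w i * c i ≤ t := by
  classical
  by_contra hne
  set W := {w ∈ stdSimplex ℝ ι | ∀ i ∉ s, w i = 0}
  set T := Fintype.linearCombination ℝ fun i => (v i, c i)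
  set L := {p : E × ℝ | p.1 = y ∧ p.2 ≤ t}
  have hWconv : Convex ℝ W := by
    rintro w ⟨hw, hws⟩ w' ⟨hw', hws'⟩ a b ha hb hab
    exact ⟨convex_stdSimplex ℝ ι hw hw' ha hb hab, fun i hi => by simp [hws i hi, hws' i hi]⟩
  have hWcpt : IsCompact W := by
    refine (isCompact_stdSimplex ℝ ι).inter_right (t := {w | ∀ i ∉ s, w i = 0}) ?_
    simp only [Set.ofPred_forall]
    exact isClosed_iInter fun i => isClosed_iInter fun _ =>
      isClosed_eq (continuous_apply i) continuous_const
  have hLconv : Convex ℝ L := by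
    rintro p ⟨hp1, hp2⟩ r ⟨hr1, hr2⟩ a b ha hb hab
    refine ⟨by simp [hp1, hr1, ← add_smul, hab], ?_⟩
    calc (a • p + b • r).2 = a * p.2 + b * r.2 := rfl
      _ ≤ a * t + b * t := by gcongr
      _ = t := by rw [← add_mul, hab, one_mul]
  have hLclosed : IsClosed L :=
    (isClosed_eq continuous_fst continuous_const).inter
      (isClosed_le continuous_snd continuous_const)
  have hdisj : Disjoint (T '' W) L := by
    rw [Set.disjoint_left]
    rintro _ ⟨w, ⟨hw, hws⟩, rfl⟩ ⟨hwy, hwt⟩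
    refine hne ⟨w, hw, hws, ?_, ?_⟩
    · simpa [T, Fintype.linearCombination_apply, Prod.fst_sum] using hwy
    · simpa [T, Fintype.linearCombination_apply, Prod.snd_sum] using hwt
  obtain ⟨φ, u, u', hφK, huu', hφL⟩ := geometric_hahn_banach_compact_closed
    (hWconv.linear_image T) (hWcpt.image T.continuous_of_finiteDimensional) hLconv hLclosed hdisj
  set ψ := φ.comp (ContinuousLinearMap.inl ℝ E ℝ)
  set β := φ (0, 1)
  have hφ : ∀ x r, φ (x, r) = ψ x + r * β := fun x r => by
    rw [← smul_eq_mul, ← map_smul, ContinuousLinearMap.comp_apply, ← map_add]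
    simp
  -- `L` is unbounded below in the last coordinate, so `φ` cannot increase along it.
  have hβ : β ≤ 0 := by
    by_contra! hβ
    have := hφL (y, min t ((u' - ψ y) / β)) ⟨rfl, min_le_left _ _⟩
    rw [hφ] at this
    have := (le_div_iff₀ hβ).1 (min_le_right t ((u' - ψ y) / β))
    linarith
  obtain ⟨i, hi, hle⟩ := h (-ψ) (-β) (neg_nonneg.2 hβ)
  have hsingle : Pi.single i 1 ∈ W :=
    ⟨single_mem_stdSimplex ℝ i, fun j hj => Pi.single_eq_of_ne (by rintro rfl; exact hj hi) 1⟩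
  have hK := hφK _ ⟨_, hsingle, rfl⟩
  have hL := hφL (y, t) ⟨rfl, le_rfl⟩
  rw [Fintype.linearCombination_apply_single, one_smul, hφ] at hK
  rw [hφ] at hL
  simp only [neg_apply] at hle
  linarith

end Separation

/-- A Lagrangian-multiplier-preserving `ρ`-approximation algorithm, seen as an oracle on metric
instances. -/
def IsLMPApprox (F D : Type*) [Fintype F] [Fintype D] (ρ : ℝ) : Prop :=
  ∀ (f : F → ℝ) (c : F → D → ℝ), (∀ ℓ, 0 ≤ f ℓ) → (∀ ℓ j, 0 ≤ c ℓ j) →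
    (∀ ℓ ℓ' j j', c ℓ j ≤ c ℓ j' + c ℓ' j' + c ℓ' j) →
    ∃ q : (F → Bool) × (F → D → Bool), FLFeas (boolY q.1) (boolX q.2) ∧
      ∀ y x, FLFeas y x →
        ρ * (∑ ℓ, f ℓ * boolY q.1 ℓ) + ∑ ℓ, ∑ j, c ℓ j * boolX q.2 ℓ j ≤
          ρ * ((∑ ℓ, f ℓ * y ℓ) + ∑ ℓ, ∑ j, c ℓ j * x ℓ j)

section FacilityLocation

variable {F D : Type*}

theorem boolY_le_one (p : F → Bool) (ℓ : F) : boolY p ℓ ≤ 1 := by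
  unfold boolY; split <;> norm_num

theorem boolY_le_boolY_or (p p' : F → Bool) (ℓ : F) :
    boolY p ℓ ≤ boolY (fun ℓ => p ℓ || p' ℓ) ℓ := by
  cases h : p ℓ <;> cases h' : p' ℓ <;> simp [boolY, h, h']

theorem mul_boolY_or_sub_le (p : F → Bool) (α y : F → ℝ) (ℓ : F) (hy : y ℓ ≤ 1) :
    α ℓ * (boolY (fun ℓ => p ℓ || decide (α ℓ < 0)) ℓ - y ℓ) ≤
      max (α ℓ) 0 * (boolY p ℓ - y ℓ) := by
  rcases lt_or_ge (α ℓ) 0 with hα | hα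
  · simp only [boolY, hα, decide_true, Bool.or_true, if_true, max_eq_right hα.le, zero_mul]
    nlinarith
  · simp [boolY, not_lt.2 hα, max_eq_left hα]

variable [Fintype F]

theorem FLFeas.of_le {y y' : F → ℝ} {x : F → D → ℝ} (h : FLFeas y x) (hle : ∀ ℓ, y ℓ ≤ y' ℓ)
    (hle_one : ∀ ℓ, y' ℓ ≤ 1) : FLFeas y' x :=
  ⟨h.1, fun ℓ j => ⟨⟨(h.2 ℓ j).1.1, (h.2 ℓ j).1.2.trans (hle ℓ)⟩, hle_one ℓ⟩⟩

variable [Fintype D] {ρ : ℝ}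

theorem FLFeas.le_one_of_isLMPApprox (hA : IsLMPApprox F D ρ) (hρ : 0 < ρ)
    {y : F → ℝ} {x : F → D → ℝ} (h : FLFeas y x) (ℓ : F) : y ℓ ≤ 1 := by
  rcases isEmpty_or_nonempty D with hD | ⟨⟨j⟩⟩
  · -- Without clients `y` is unconstrained, and the guarantee against `boolY q - 1` fails.
    exfalso
    have hfeas : ∀ y' : F → ℝ, FLFeas y' (0 : F → D → ℝ) :=
      fun _ => ⟨isEmptyElim, fun _ j => isEmptyElim j⟩
    obtain ⟨q, -, hq⟩ := hA 1 0 (fun _ => zero_le_one) (fun _ _ => le_rfl) (fun _ _ _ _ => by simp)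
    have := hq (fun ℓ' => boolY q.1 ℓ' - 1) 0 (hfeas _)
    have hcard : (0 : ℝ) < Fintype.card F := by
      have : Nonempty F := ⟨ℓ⟩
      exact_mod_cast Fintype.card_pos
    simp [Finset.sum_sub_distrib] at this
    nlinarith
  · exact (h.2 ℓ j).2

theorem IsLMPApprox.exists_feasible_le (hA : IsLMPApprox F D ρ) (hρ : 0 < ρ)
    {c : F → D → ℝ} (hc : ∀ ℓ j, 0 ≤ c ℓ j)
    (hmetric : ∀ ℓ ℓ' j j', c ℓ j ≤ c ℓ j' + c ℓ' j' + c ℓ' j)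
    {y : F → ℝ} {x : F → D → ℝ} (hfeas : FLFeas y x) (α : F → ℝ) {β : ℝ} (hβ : 0 ≤ β) :
    ∃ q : (F → Bool) × (F → D → Bool), FLFeas (boolY q.1) (boolX q.2) ∧
      ∑ ℓ, α ℓ * boolY q.1 ℓ + β * ∑ ℓ, ∑ j, c ℓ j * boolX q.2 ℓ j ≤
        ∑ ℓ, α ℓ * y ℓ + β * (ρ * ∑ ℓ, ∑ j, c ℓ j * x ℓ j) := by
  obtain ⟨q, hq, hLMP⟩ := hA (fun ℓ => max (α ℓ) 0 / ρ) (fun ℓ j => β * c ℓ j)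
    (fun ℓ => by positivity) (fun ℓ j => mul_nonneg hβ (hc ℓ j))
    (fun ℓ ℓ' j j' => by nlinarith [mul_le_mul_of_nonneg_left (hmetric ℓ ℓ' j j') hβ])
  have hfac : ∀ z : F → ℝ, ρ * ∑ ℓ, max (α ℓ) 0 / ρ * z ℓ = ∑ ℓ, max (α ℓ) 0 * z ℓ := fun z => by
    rw [Finset.mul_sum]
    exact Finset.sum_congr rfl fun ℓ _ => by field_simp
  have hconn : ∀ z : F → D → ℝ, ∑ ℓ, ∑ j, β * c ℓ j * z ℓ j = β * ∑ ℓ, ∑ j, c ℓ j * z ℓ j :=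
    fun z => by simp only [Finset.mul_sum, mul_assoc]
  have hbound := hLMP y x hfeas
  rw [mul_add, hfac, hfac, hconn, hconn] at hbound
  have hy := hfeas.le_one_of_isLMPApprox hA hρ
  refine ⟨(fun ℓ => q.1 ℓ || decide (α ℓ < 0), q.2),
    hq.of_le (boolY_le_boolY_or q.1 _) (boolY_le_one _), ?_⟩
  have hopen := Finset.sum_le_sum fun ℓ (_ : ℓ ∈ univ) => mul_boolY_or_sub_le q.1 α y ℓ (hy ℓ)
  simp only [mul_sub, Finset.sum_sub_distrib] at hopen
  linarith

end FacilityLocation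

theorem stmt17_general {F D : Type*} [Fintype F] [Fintype D] [DecidableEq F] [DecidableEq D]
    (cm : F → D → ℝ)
    (hcm : ∀ ℓ j, 0 ≤ cm ℓ j)
    (hmetric : ∀ ℓ ℓ' j j', cm ℓ j ≤ cm ℓ j' + cm ℓ' j' + cm ℓ' j)
    (ρ : ℝ) (hρ : 1 ≤ ρ)
    (hLMP : ∀ (f' : F → ℝ) (c' : F → D → ℝ), (∀ ℓ, 0 ≤ f' ℓ) → (∀ ℓ j, 0 ≤ c' ℓ j) →
      (∀ ℓ ℓ' j j', c' ℓ j ≤ c' ℓ j' + c' ℓ' j' + c' ℓ' j) →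
      ∃ q : (F → Bool) × (F → D → Bool), FLFeas (boolY q.1) (boolX q.2) ∧
        ∀ y x, FLFeas y x →
          ρ * (∑ ℓ, f' ℓ * boolY q.1 ℓ) + ∑ ℓ, ∑ j, c' ℓ j * boolX q.2 ℓ j ≤
            ρ * ((∑ ℓ, f' ℓ * y ℓ) + ∑ ℓ, ∑ j, c' ℓ j * x ℓ j))
    (ystar : F → ℝ) (xstar : F → D → ℝ)
    (hfeas : FLFeas ystar xstar) :
    ∃ lam : ((F → Bool) × (F → D → Bool)) → ℝ,
      (∀ q, 0 ≤ lam q) ∧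
      (∀ q, ¬ FLFeas (boolY q.1) (boolX q.2) → lam q = 0) ∧
      (∑ q, lam q = 1) ∧
      (∀ ℓ, ∑ q, lam q * boolY q.1 ℓ = ystar ℓ) ∧
      (∑ q, lam q * (∑ ℓ, ∑ j, cm ℓ j * boolX q.2 ℓ j) ≤
        ρ * ∑ ℓ, ∑ j, cm ℓ j * xstar ℓ j) := by
  classical
  obtain ⟨w, ⟨hw_nonneg, hw_sum⟩, hw_supp, hw_y, hw_conn⟩ :=
    exists_mem_stdSimplex_sum_smul_eq_of_forall_dual
      {q : (F → Bool) × (F → D → Bool) | FLFeas (boolY q.1) (boolX q.2)} (fun q => boolY q.1)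
      (fun q => ∑ ℓ, ∑ j, cm ℓ j * boolX q.2 ℓ j) ystar
      (ρ * ∑ ℓ, ∑ j, cm ℓ j * xstar ℓ j) fun φ β hβ => by
        have hφ (z : F → ℝ) : φ z = ∑ ℓ, φ (fun ℓ' => if ℓ = ℓ' then 1 else 0) * z ℓ := by
          simp_rw [mul_comm _ (z _)]
          exact LinearMap.pi_apply_eq_sum_univ (φ : (F → ℝ) →ₗ[ℝ] ℝ) z
        obtain ⟨q, hq, hle⟩ := IsLMPApprox.exists_feasible_le hLMP (zero_lt_one.trans_le hρ)
          hcm hmetric hfeas _ hβ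
        exact ⟨q, hq, by rwa [hφ (boolY q.1), hφ ystar]⟩
  exact ⟨w, hw_nonneg, hw_supp, hw_sum, fun ℓ => by simpa using congrFun hw_y ℓ, hw_conn⟩

/-- Given an optimal fractional solution `(y*, x*)` of the facility-location LP and an LMP
`ρ`-approximation algorithm, the convex-decomposition LP
`max {∑ λ_q : ∑ λ_q y^{(q)} = y*, ∑ λ_q conn(x^{(q)}) ≤ ρ conn(x*), ∑ λ_q ≤ 1, λ ≥ 0}`
over integral feasible solutions has optimal value exactly 1. -/
theorem stmt17 {F D : Type*} [Fintype F] [Fintype D] [DecidableEq F] [DecidableEq D]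
    (f : F → ℝ) (cm : F → D → ℝ)
    (hf : ∀ ℓ, 0 ≤ f ℓ) (hcm : ∀ ℓ j, 0 ≤ cm ℓ j)
    (hmetric : ∀ ℓ ℓ' j j', cm ℓ j ≤ cm ℓ j' + cm ℓ' j' + cm ℓ' j)
    (ρ : ℝ) (hρ : 1 ≤ ρ)
    (hLMP : ∀ (f' : F → ℝ) (c' : F → D → ℝ), (∀ ℓ, 0 ≤ f' ℓ) → (∀ ℓ j, 0 ≤ c' ℓ j) →
      (∀ ℓ ℓ' j j', c' ℓ j ≤ c' ℓ j' + c' ℓ' j' + c' ℓ' j) →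
      ∃ q : (F → Bool) × (F → D → Bool), FLFeas (boolY q.1) (boolX q.2) ∧
        ∀ y x, FLFeas y x →
          ρ * (∑ ℓ, f' ℓ * boolY q.1 ℓ) + ∑ ℓ, ∑ j, c' ℓ j * boolX q.2 ℓ j ≤
            ρ * ((∑ ℓ, f' ℓ * y ℓ) + ∑ ℓ, ∑ j, c' ℓ j * x ℓ j))
    (ystar : F → ℝ) (xstar : F → D → ℝ)
    (hfeas : FLFeas ystar xstar)
    (hopt : ∀ y x, FLFeas y x →
      (∑ ℓ, f ℓ * ystar ℓ) + ∑ ℓ, ∑ j, cm ℓ j * xstar ℓ j ≤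
        (∑ ℓ, f ℓ * y ℓ) + ∑ ℓ, ∑ j, cm ℓ j * x ℓ j) :
    ∃ lam : ((F → Bool) × (F → D → Bool)) → ℝ,
      (∀ q, 0 ≤ lam q) ∧
      (∀ q, ¬ FLFeas (boolY q.1) (boolX q.2) → lam q = 0) ∧
      (∑ q, lam q = 1) ∧
      (∀ ℓ, ∑ q, lam q * boolY q.1 ℓ = ystar ℓ) ∧
      (∑ q, lam q * (∑ ℓ, ∑ j, cm ℓ j * boolX q.2 ℓ j) ≤
        ρ * ∑ ℓ, ∑ j, cm ℓ j * xstar ℓ j) :=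
  stmt17_general cm hcm hmetric ρ hρ hLMP ystar xstar hfeas
end

section
/- Let S = {v ∈ S_1} ⊆ N(u) be an independent set of in-neighbors of u and suppose a feasible neighbor-threshold vertex cover mechanism M has approximation ratio ρ on graph G. Define for each w ∈ S the quantity x_w = inf{σ ≥ 0 : t_u(c_w = β, c_{−w} = 0) ≥ 1 for all β ≥ σ}, where t_u is u's threshold function. Then 0 < x_w < ∞ for each w, and Σ_{w∈S} x_w ≤ ρ. -/
/-!
Probe `u`'s threshold with the cost vectors `c = 𝟙_u + β 𝟙_w`, for `w` a neighbour of `u`.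
If `t_u(β 𝟙_w) < 1`, then `u` is not selected, so feasibility selects `w`, whence
`β ≤ τ_w := t_w(𝟙_u)`; thus `x_w ≤ τ_w`, and in particular `x_w < ∞`. If `t_u(σ 𝟙_w) ≥ 1`, then
`u` is selected while `V ∖ {u}` is a cover of cost `σ`, so `1 ≤ ρ σ`; thus `x_w ≥ 1 / ρ > 0`.
Finally, with `c = 𝟙_u + ∑_{w ∈ S} τ_w 𝟙_w` every `w ∈ S` sits exactly at its threshold, because
its neighbours lie outside the independent set `S`, and `V ∖ S` is a cover of cost `1`,
so `∑_{w ∈ S} x_w ≤ ∑_{w ∈ S} τ_w ≤ ρ`.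
-/

open Finset

namespace NeighborThreshold

variable {V : Type*} {G : SimpleGraph V} {t : V → (V → ℝ) → ℝ} {ρ : ℝ}

variable (G) in
def IsLocal [Fintype V] [DecidableRel G.Adj] (t : V → (V → ℝ) → ℝ) : Prop :=
  ∀ w (c c' : V → ℝ), (∀ v ∈ G.neighborFinset w, c v = c' v) → t w c = t w c'

variable (G) in
def IsFeasible (t : V → (V → ℝ) → ℝ) : Prop :=
  ∀ c : V → ℝ, (∀ v, 0 ≤ c v) → ∀ a b, G.Adj a b → c a ≤ t a c ∨ c b ≤ t b c

noncomputable def selected [Fintype V] (t : V → (V → ℝ) → ℝ) (c : V → ℝ) : Finset V :=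
  univ.filter fun v => c v ≤ t v c

variable (G) in
def HasApproxRatio [Fintype V] (t : V → (V → ℝ) → ℝ) (ρ : ℝ) : Prop :=
  ∀ c : V → ℝ, (∀ v, 0 ≤ c v) → ∀ T : Finset V, G.IsVertexCover ↑T →
    ∑ v ∈ selected t c, c v ≤ ρ * ∑ v ∈ T, c v

def spike [DecidableEq V] (w : V) (β : ℝ) : V → ℝ := fun z => if z = w then β else 0

def crossingSet [DecidableEq V] (t : V → (V → ℝ) → ℝ) (u w : V) : Set ℝ :=
  {σ | 0 ≤ σ ∧ ∀ β, σ ≤ β → 1 ≤ t u (spike w β)}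

noncomputable def crossing [DecidableEq V] (t : V → (V → ℝ) → ℝ) (u w : V) : ℝ :=
  sInf (crossingSet t u w)

theorem HasApproxRatio.sum_le [Fintype V] (happrox : HasApproxRatio G t ρ) {c : V → ℝ}
    (hc : ∀ v, 0 ≤ c v) {R T : Finset V} (hT : G.IsVertexCover ↑T)
    (hR : ∀ v ∈ R, c v ≤ t v c) : ∑ v ∈ R, c v ≤ ρ * ∑ v ∈ T, c v :=
  (sum_le_sum_of_subset_of_nonneg (fun v hv => mem_filter.2 ⟨mem_univ v, hR v hv⟩)
    fun v _ _ => hc v).trans (happrox c hc T hT)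

theorem update_spike_nonneg [DecidableEq V] (u w : V) {β : ℝ} (hβ : 0 ≤ β) :
    ∀ v, 0 ≤ Function.update (spike w β) u 1 v := by
  intro v
  simp only [Function.update_apply, spike]
  split_ifs <;> first | exact zero_le_one | exact hβ | exact le_rfl

section

variable [Fintype V] [DecidableEq V] [DecidableRel G.Adj]

theorem IsLocal.update_self (hloc : IsLocal G t) (c : V → ℝ) (w : V) (a : ℝ) :
    t w (Function.update c w a) = t w c :=
  hloc w _ _ fun v hv =>
    Function.update_of_ne (G.ne_of_adj ((G.mem_neighborFinset w v).1 hv)).symm _ _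

theorem le_threshold_of_threshold_spike_lt_one
    (hloc : IsLocal G t) (hfeas : IsFeasible G t)
    {u w : V} (huw : G.Adj u w) {β : ℝ} (hβ : 0 ≤ β) (h : t u (spike w β) < 1) :
    β ≤ t w (Pi.single u 1) := by
  set c := Function.update (spike w β) u 1
  have hu : ¬c u ≤ t u c := by
    simpa [c, hloc.update_self] using h
  have hw : c w ≤ t w c := (hfeas c (update_spike_nonneg u w hβ) u w huw).resolve_left hu
  have hcw : c w = β := by simp [c, spike, huw.ne.symm]
  have htw : t w c = t w (Pi.single u 1) := hloc w _ _ fun v hv => by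
    have hvw : v ≠ w := (G.ne_of_adj ((G.mem_neighborFinset w v).1 hv)).symm
    simp [c, Function.update_apply, spike, Pi.single_apply, hvw]
  rwa [hcw, htw] at hw

theorem one_le_mul_of_one_le_threshold_spike
    (hloc : IsLocal G t)
    (happrox : HasApproxRatio G t ρ) {u w : V} (huw : G.Adj u w) {σ : ℝ} (hσ : 0 ≤ σ)
    (h : 1 ≤ t u (spike w σ)) : 1 ≤ ρ * σ := by
  set c := Function.update (spike w σ) u 1
  have hcover : G.IsVertexCover ↑({u}ᶜ : Finset V) := by
    rw [coe_compl, coe_singleton, SimpleGraph.isVertexCover_compl]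
    exact Set.pairwise_singleton u _
  have hsel := happrox.sum_le (R := {u}) (update_spike_nonneg u w hσ) hcover
    (by simpa [c, hloc.update_self] using h)
  have hcost : ∑ v ∈ ({u}ᶜ : Finset V), c v = σ := by
    rw [sum_update_of_notMem (by simp)]
    simp [spike, huw.ne.symm]
  simpa [c, hcost] using hsel

theorem sum_threshold_le
    (hloc : IsLocal G t) (happrox : HasApproxRatio G t ρ) {u : V}
    {S : Finset V} (hS : S ⊆ G.neighborFinset u) (hindep : G.IsIndepSet ↑S)
    (hpos : ∀ w ∈ S, 0 ≤ t w (Pi.single u 1)) : ∑ w ∈ S, t w (Pi.single u 1) ≤ ρ := by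
  have huS : u ∉ S := fun h => G.notMem_neighborFinset_self u (hS h)
  set c := Function.update (fun v => if v ∈ S then t v (Pi.single u 1) else 0) u 1
  have hc : ∀ v, 0 ≤ c v := by
    intro v
    simp only [c, Function.update_apply]
    split_ifs with h₁ h₂ <;> first | exact zero_le_one | exact hpos v h₂ | exact le_rfl
  have hcS : ∀ w ∈ S, c w = t w (Pi.single u 1) := fun w hw => by
    simp [c, hw, ne_of_mem_of_not_mem hw huS]
  have hsel : ∀ w ∈ S, c w ≤ t w c := fun w hw => by
    rw [hcS w hw, hloc w c (Pi.single u 1) fun v hv => ?_]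
    have hwv : G.Adj w v := (G.mem_neighborFinset w v).1 hv
    have hvS : v ∉ S := fun hvS => hindep hw hvS hwv.ne hwv
    simp [c, Function.update_apply, Pi.single_apply, hvS]
  have hcover : G.IsVertexCover ↑(Sᶜ) := by
    rw [coe_compl, SimpleGraph.isVertexCover_compl]
    exact hindep
  have hcost : ∑ v ∈ Sᶜ, c v = 1 := by
    rw [sum_update_of_mem (mem_compl.2 huS),
      sum_eq_zero fun v hv => if_neg (mem_compl.1 (mem_sdiff.1 hv).1), add_zero]
  calc ∑ w ∈ S, t w (Pi.single u 1) = ∑ w ∈ S, c w := (sum_congr rfl hcS).symm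
    _ ≤ ρ * ∑ v ∈ Sᶜ, c v := happrox.sum_le hc hcover hsel
    _ = ρ := by rw [hcost, mul_one]

theorem mem_crossingSet_of_threshold_lt
    (hloc : IsLocal G t) (hfeas : IsFeasible G t)
    {u w : V} (huw : G.Adj u w) {σ : ℝ} (hσ : 0 ≤ σ) (hlt : t w (Pi.single u 1) < σ) :
    σ ∈ crossingSet t u w :=
  ⟨hσ, fun _ hβ => not_lt.1 fun h =>
    (le_threshold_of_threshold_spike_lt_one hloc hfeas huw (hσ.trans hβ) h).not_gt
      (hlt.trans_le hβ)⟩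

theorem crossingSet_nonempty
    (hloc : IsLocal G t) (hfeas : IsFeasible G t) {u w : V}
    (huw : G.Adj u w) : (crossingSet t u w).Nonempty :=
  ⟨_, mem_crossingSet_of_threshold_lt hloc hfeas huw (by positivity)
    ((le_max_left _ 0).trans_lt (lt_add_one (max (t w (Pi.single u 1)) 0)))⟩

theorem crossing_le_max_threshold
    (hloc : IsLocal G t) (hfeas : IsFeasible G t) {u w : V}
    (huw : G.Adj u w) : crossing t u w ≤ max (t w (Pi.single u 1)) 0 :=
  le_of_forall_gt_imp_ge_of_dense fun _ hσ =>
    csInf_le ⟨0, fun _ h => h.1⟩ (mem_crossingSet_of_threshold_lt hloc hfeas huw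
      ((le_max_right _ _).trans hσ.le) ((le_max_left _ _).trans_lt hσ))

theorem crossing_pos
    (hloc : IsLocal G t) (hfeas : IsFeasible G t)
    (happrox : HasApproxRatio G t ρ) {u w : V} (huw : G.Adj u w) : 0 < crossing t u w := by
  have hbound : ∀ σ ∈ crossingSet t u w, 1 ≤ ρ * σ := fun σ hσ =>
    one_le_mul_of_one_le_threshold_spike hloc happrox huw hσ.1 (hσ.2 σ le_rfl)
  obtain ⟨σ₀, hσ₀⟩ := crossingSet_nonempty hloc hfeas huw
  have hρ : 0 < ρ := pos_of_mul_pos_left (one_pos.trans_le (hbound σ₀ hσ₀)) hσ₀.1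
  have hinv : ρ⁻¹ ≤ crossing t u w :=
    le_csInf ⟨σ₀, hσ₀⟩ fun σ hσ => (inv_le_iff_one_le_mul₀' hρ).2 (hbound σ hσ)
  exact (inv_pos.2 hρ).trans_le hinv

theorem crossing_le_threshold
    (hloc : IsLocal G t) (hfeas : IsFeasible G t)
    (happrox : HasApproxRatio G t ρ) {u w : V} (huw : G.Adj u w) :
    crossing t u w ≤ t w (Pi.single u 1) :=
  (le_max_iff.1 (crossing_le_max_threshold hloc hfeas huw)).resolve_right
    (crossing_pos hloc hfeas happrox huw).not_ge

end

end NeighborThreshold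

open NeighborThreshold

theorem stmt18_general {V : Type*} [Fintype V] [DecidableEq V]
    (G : SimpleGraph V) [DecidableRel G.Adj]
    (t : V → (V → ℝ) → ℝ)
    (hdep : ∀ w (c c' : V → ℝ), (∀ v ∈ G.neighborFinset w, c v = c' v) → t w c = t w c')
    (hfeas : ∀ c : V → ℝ, (∀ v, 0 ≤ c v) → ∀ a b, G.Adj a b →
      c a ≤ t a c ∨ c b ≤ t b c)
    (ρ : ℝ)
    (happrox : ∀ c : V → ℝ, (∀ v, 0 ≤ c v) → ∀ T : Finset V,
      (∀ a b, G.Adj a b → a ∈ T ∨ b ∈ T) →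
      ∑ v ∈ Finset.univ.filter (fun v => c v ≤ t v c), c v ≤ ρ * ∑ v ∈ T, c v)
    (u : V) (S : Finset V) (hS : S ⊆ G.neighborFinset u)
    (hindep : ∀ a ∈ S, ∀ b ∈ S, ¬ G.Adj a b) :
    (∀ w ∈ S,
      {σ : ℝ | 0 ≤ σ ∧ ∀ β, σ ≤ β →
          1 ≤ t u (fun z => if z = w then β else 0)}.Nonempty ∧
      0 < sInf {σ : ℝ | 0 ≤ σ ∧ ∀ β, σ ≤ β →
          1 ≤ t u (fun z => if z = w then β else 0)}) ∧
    ∑ w ∈ S, sInf {σ : ℝ | 0 ≤ σ ∧ ∀ β, σ ≤ β →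
        1 ≤ t u (fun z => if z = w then β else 0)} ≤ ρ := by
  have huw : ∀ w ∈ S, G.Adj u w := fun w hw => (G.mem_neighborFinset u w).1 (hS hw)
  refine ⟨fun w hw => ⟨crossingSet_nonempty hdep hfeas (huw w hw),
    crossing_pos hdep hfeas happrox (huw w hw)⟩, ?_⟩
  have hle : ∀ w ∈ S, crossing t u w ≤ t w (Pi.single u 1) := fun w hw =>
    crossing_le_threshold hdep hfeas happrox (huw w hw)
  calc ∑ w ∈ S, crossing t u w ≤ ∑ w ∈ S, t w (Pi.single u 1) := sum_le_sum hle
    _ ≤ ρ := sum_threshold_le hdep happrox hS (fun a ha b hb _ => hindep a ha b hb)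
      fun w hw => (crossing_pos hdep hfeas happrox (huw w hw)).le.trans (hle w hw)

/-- For a feasible neighbor-threshold vertex-cover mechanism with approximation ratio `ρ`
and an independent set `S ⊆ N(u)`: each quantity
`x_w = inf {σ ≥ 0 : t_u(c_w = β, c_{-w} = 0) ≥ 1 for all β ≥ σ}` is positive and
well-defined (the set is nonempty, i.e. `x_w < ∞`), and `∑_{w ∈ S} x_w ≤ ρ`. -/
theorem stmt18 {V : Type*} [Fintype V] [DecidableEq V]
    (G : SimpleGraph V) [DecidableRel G.Adj]
    (t : V → (V → ℝ) → ℝ)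
    (hdep : ∀ w (c c' : V → ℝ), (∀ v ∈ G.neighborFinset w, c v = c' v) → t w c = t w c')
    (hfeas : ∀ c : V → ℝ, (∀ v, 0 ≤ c v) → ∀ a b, G.Adj a b →
      c a ≤ t a c ∨ c b ≤ t b c)
    (ρ : ℝ) (hρ : 1 ≤ ρ)
    (happrox : ∀ c : V → ℝ, (∀ v, 0 ≤ c v) → ∀ T : Finset V,
      (∀ a b, G.Adj a b → a ∈ T ∨ b ∈ T) →
      ∑ v ∈ Finset.univ.filter (fun v => c v ≤ t v c), c v ≤ ρ * ∑ v ∈ T, c v)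
    (u : V) (S : Finset V) (hS : S ⊆ G.neighborFinset u)
    (hindep : ∀ a ∈ S, ∀ b ∈ S, ¬ G.Adj a b) :
    (∀ w ∈ S,
      {σ : ℝ | 0 ≤ σ ∧ ∀ β, σ ≤ β →
          1 ≤ t u (fun z => if z = w then β else 0)}.Nonempty ∧
      0 < sInf {σ : ℝ | 0 ≤ σ ∧ ∀ β, σ ≤ β →
          1 ≤ t u (fun z => if z = w then β else 0)}) ∧
    ∑ w ∈ S, sInf {σ : ℝ | 0 ≤ σ ∧ ∀ β, σ ≤ β →
        1 ≤ t u (fun z => if z = w then β else 0)} ≤ ρ :=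
  stmt18_general G t hdep hfeas ρ happrox u S hS hindep
end
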